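/- arXiv:1402.5458 — 3 statements merged into one kernel-verified Lean document; each statement's English description precedes it below -/
import Mathlib

section
/- With the setup of an exponential family with log-partition function T and mean map μ = ∇T(θ), for any density p with E_p[φ(x)] = μ = ∇T(θ) and any alternative θ̂ with μ̂ = ∇T(θ̂), we have E_p[log p(x; μ)] - E_p[log p(x; μ̂)] = T(θ̂) - T(θ) - ⟨θ̂ - θ, ∇T(θ)⟩ ≥ 0, with strict inequality when μ̂ ≠ μ. Hence the generalized logarithmic scoring rule S(μ, x) = log p(x; μ) is proper for the statistic φ. -/
/-!
Integrating the log-density `⟪η, φ x⟫ - T η` against `p` only sees the mean of `φ`, so the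
expected score of reporting `η` is `⟪η, μ⟫ - T η`, and with `μ = ∇T θ` the difference of scores
is the Bregman divergence of `T` from `θ` to `θ̂`. Its sign is the first-order characterisation
of (strict) convexity, obtained by restricting `T` to the line through `θ` and `θ̂`.
-/

open RealInnerProductSpace MeasureTheory AffineMap

theorem StrictConvexOn.comp_affineMap_of_injective {𝕜 E F β : Type*} [Field 𝕜]
    [LinearOrder 𝕜] [AddCommGroup E] [AddCommGroup F] [AddCommMonoid β] [PartialOrder β]
    [Module 𝕜 E] [Module 𝕜 F] [SMul 𝕜 β] {f : F → β} {g : E →ᵃ[𝕜] F}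
    (hg : Function.Injective g) {s : Set F} (hf : StrictConvexOn 𝕜 s f) :
    StrictConvexOn 𝕜 (g ⁻¹' s) (f ∘ g) :=
  ⟨hf.1.affine_preimage _, fun x hx y hy hxy a b ha hb hab =>
    calc
      (f ∘ g) (a • x + b • y) = f (a • g x + b • g y) := by
        rw [Function.comp_apply, Convex.combo_affine_apply hab]
      _ < a • f (g x) + b • f (g y) := hf.2 hx hy (hg.ne hxy) ha hb hab⟩

section FirstOrder

variable {E : Type*} [NormedAddCommGroup E] [NormedSpace ℝ E] {s : Set E} {f : E → ℝ}
  {f' : E →L[ℝ] ℝ} {x y : E}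

theorem hasDerivAt_comp_lineMap_zero (hf : HasFDerivAt f f' x) :
    HasDerivAt (f ∘ (lineMap x y : ℝ →ᵃ[ℝ] E)) (f' (y - x)) 0 := by
  have hx : lineMap x y (0 : ℝ) = x := by simp
  exact (hx ▸ hf).comp_hasDerivAt (0 : ℝ) hasDerivAt_lineMap

theorem ConvexOn.le_sub_of_hasFDerivAt (hf : ConvexOn ℝ s f) (hx : x ∈ s) (hy : y ∈ s)
    (hf' : HasFDerivAt f f' x) : f' (y - x) ≤ f y - f x := by
  simpa [slope_def_field] using
    (hf.comp_affineMap (lineMap x y)).le_slope_of_hasDerivAt (x := 0) (y := 1)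
      (by simpa using hx) (by simpa using hy) one_pos (hasDerivAt_comp_lineMap_zero hf')

theorem StrictConvexOn.lt_sub_of_hasFDerivAt (hf : StrictConvexOn ℝ s f) (hx : x ∈ s)
    (hy : y ∈ s) (hxy : x ≠ y) (hf' : HasFDerivAt f f' x) : f' (y - x) < f y - f x := by
  simpa [slope_def_field] using
    (hf.comp_affineMap_of_injective (lineMap_injective ℝ hxy)).lt_slope_of_hasDerivAt
      (x := 0) (y := 1) (by simpa using hx) (by simpa using hy) one_pos
      (hasDerivAt_comp_lineMap_zero hf')

end FirstOrder

section Bregman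

variable {E : Type*} [NormedAddCommGroup E] [InnerProductSpace ℝ E] [CompleteSpace E]
  {s : Set E} {f : E → ℝ} {f' : E → E} {x y : E}

def bregmanDiv (f : E → ℝ) (f' : E → E) (y x : E) : ℝ :=
  f y - f x - ⟪y - x, f' x⟫

theorem ConvexOn.bregmanDiv_nonneg (hf : ConvexOn ℝ s f) (hx : x ∈ s) (hy : y ∈ s)
    (hf' : HasGradientAt f (f' x) x) : 0 ≤ bregmanDiv f f' y x := by
  have hfirst := hf.le_sub_of_hasFDerivAt hx hy hf'.hasFDerivAt
  rw [InnerProductSpace.toDual_apply_apply] at hfirst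
  rw [bregmanDiv, real_inner_comm]
  linarith

theorem StrictConvexOn.bregmanDiv_pos (hf : StrictConvexOn ℝ s f) (hx : x ∈ s) (hy : y ∈ s)
    (hxy : x ≠ y) (hf' : HasGradientAt f (f' x) x) : 0 < bregmanDiv f f' y x := by
  have hfirst := hf.lt_sub_of_hasFDerivAt hx hy hxy hf'.hasFDerivAt
  rw [InnerProductSpace.toDual_apply_apply] at hfirst
  rw [bregmanDiv, real_inner_comm]
  linarith

end Bregman

theorem integral_mul_inner_sub_const {X E : Type*} [MeasurableSpace X] {ν : Measure X}
    [NormedAddCommGroup E] [InnerProductSpace ℝ E] [CompleteSpace E] {p : X → ℝ} {φ : X → E}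
    (hp : Integrable p ν) (hpφ : Integrable (fun x => p x • φ x) ν) (η : E) (c : ℝ) :
    ∫ x, p x * (⟪η, φ x⟫ - c) ∂ν = ⟪η, ∫ x, p x • φ x ∂ν⟫ - (∫ x, p x ∂ν) * c := by
  have hpointwise : ∀ x, p x * (⟪η, φ x⟫ - c) = ⟪η, p x • φ x⟫ - p x * c := fun x => by
    rw [real_inner_smul_right]; ring
  simp_rw [hpointwise]
  rw [integral_sub (hpφ.const_inner η) (hp.mul_const c), integral_inner hpφ,
    integral_mul_const]

theorem generalized_log_score_proper_general
    {d : ℕ} {X : Type*} [MeasurableSpace X] (ν : Measure X)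
    (φ : X → EuclideanSpace ℝ (Fin d))
    {Θ : Set (EuclideanSpace ℝ (Fin d))}
    (T : EuclideanSpace ℝ (Fin d) → ℝ)
    (gradT : EuclideanSpace ℝ (Fin d) → EuclideanSpace ℝ (Fin d))
    (hTconv : StrictConvexOn ℝ Θ T)
    (hgrad : ∀ θ ∈ Θ, HasGradientAt T (gradT θ) θ)
    (θ θhat : EuclideanSpace ℝ (Fin d)) (hθ : θ ∈ Θ) (hθhat : θhat ∈ Θ)
    (μ μhat : EuclideanSpace ℝ (Fin d))
    (hμ : μ = gradT θ) (hμhat : μhat = gradT θhat)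
    (p : X → ℝ) (hprob : ∫ x, p x ∂ν = 1)
    (hint : Integrable p ν)
    (hintφ : Integrable (fun x => p x • φ x) ν)
    (hmean : ∫ x, p x • φ x ∂ν = μ) :
    (∫ x, p x * (⟪θ, φ x⟫ - T θ) ∂ν) - (∫ x, p x * (⟪θhat, φ x⟫ - T θhat) ∂ν)
        = T θhat - T θ - ⟪θhat - θ, gradT θ⟫
      ∧ 0 ≤ T θhat - T θ - ⟪θhat - θ, gradT θ⟫
      ∧ (μhat ≠ μ → 0 < T θhat - T θ - ⟪θhat - θ, gradT θ⟫) := by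
  refine ⟨?_, hTconv.convexOn.bregmanDiv_nonneg hθ hθhat (hgrad θ hθ), fun hne => ?_⟩
  · rw [integral_mul_inner_sub_const hint hintφ, integral_mul_inner_sub_const hint hintφ,
      hmean, hprob, hμ, inner_sub_left]
    ring
  · have hθne : θ ≠ θhat := by rintro rfl; exact hne (hμhat.trans hμ.symm)
    exact hTconv.bregmanDiv_pos hθ hθhat hθne (hgrad θ hθ)

/-- Properness of the generalized log scoring rule. For an exponential family
with strictly convex log-partition function `T` with injective gradient map
`∇T`, and any density `p` w.r.t. `ν` with statistic mean `μ = ∇T θ`, the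
difference in expected log score between reporting `μ` (natural parameter `θ`)
and `μ̂ = ∇T θ̂` equals the Bregman divergence
`T θ̂ - T θ - ⟪θ̂ - θ, ∇T θ⟫ ≥ 0`, strictly positive when `μ̂ ≠ μ`. -/
theorem generalized_log_score_proper
    {d : ℕ} {X : Type*} [MeasurableSpace X] (ν : Measure X) [SigmaFinite ν]
    (φ : X → EuclideanSpace ℝ (Fin d))
    {Θ : Set (EuclideanSpace ℝ (Fin d))} (hΘ : IsOpen Θ) (hΘc : Convex ℝ Θ)
    (T : EuclideanSpace ℝ (Fin d) → ℝ)
    (gradT : EuclideanSpace ℝ (Fin d) → EuclideanSpace ℝ (Fin d))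
    (hTconv : StrictConvexOn ℝ Θ T)
    (hgrad : ∀ θ ∈ Θ, HasGradientAt T (gradT θ) θ)
    (hinj : Set.InjOn gradT Θ)
    (θ θhat : EuclideanSpace ℝ (Fin d)) (hθ : θ ∈ Θ) (hθhat : θhat ∈ Θ)
    (μ μhat : EuclideanSpace ℝ (Fin d))
    (hμ : μ = gradT θ) (hμhat : μhat = gradT θhat)
    (p : X → ℝ) (hpos : ∀ x, 0 ≤ p x) (hprob : ∫ x, p x ∂ν = 1)
    (hint : Integrable p ν)
    (hintφ : Integrable (fun x => p x • φ x) ν)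
    (hmean : ∫ x, p x • φ x ∂ν = μ) :
    (∫ x, p x * (⟪θ, φ x⟫ - T θ) ∂ν) - (∫ x, p x * (⟪θhat, φ x⟫ - T θhat) ∂ν)
        = T θhat - T θ - ⟪θhat - θ, gradT θ⟫
      ∧ 0 ≤ T θhat - T θ - ⟪θhat - θ, gradT θ⟫
      ∧ (μhat ≠ μ → 0 < T θhat - T θ - ⟪θhat - θ, gradT θ⟫) :=
  generalized_log_score_proper_general ν φ T gradT hTconv hgrad θ θhat hθ hθhat μ μhat hμ hμhat p
    hprob hint hintφ hmean
end

section
/- Under the liquidity-adjusted cost T_λ(θ) = (1/λ) T(λθ) with λ > 0, an exponential-utility agent with risk aversion a and belief parameter θ̂ trading at market state θ has optimal trade δ moving the state to θ + δ = (λ/(λ+a)) θ̃ + (a/(λ+a)) θ, where θ̃ = θ̂/λ is the target share vector satisfying ∇T_λ(θ̃) = ∇T(θ̂). -/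
open RealInnerProductSpace

/-- Optimal trade under liquidity adjustment. With liquidity-adjusted cost
`T_λ(θ) = (1/λ) T(λθ)` (`λ > 0`), an exponential-utility agent with risk
aversion `a > 0` and belief parameter `θ̂` trading at market state `θ`
(maximizing `log a - T(θ̂ - aδ) + T θ̂ - a T_λ(θ+δ) + a T_λ θ`) has a unique
optimal trade `δ*` moving the state to
`θ + δ* = (λ/(λ+a)) θ̃ + (a/(λ+a)) θ`, where `θ̃ = θ̂/λ` is the target share
vector satisfying `∇T_λ(θ̃) = ∇T(θ̂)`. -/
theorem exp_utility_optimal_trade_liquidity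
    {d : ℕ} {Θ : Set (EuclideanSpace ℝ (Fin d))}
    (hΘ : IsOpen Θ) (hΘc : Convex ℝ Θ)
    (T : EuclideanSpace ℝ (Fin d) → ℝ)
    (gradT : EuclideanSpace ℝ (Fin d) → EuclideanSpace ℝ (Fin d))
    (hTconv : StrictConvexOn ℝ Θ T)
    (hgrad : ∀ x ∈ Θ, HasGradientAt T (gradT x) x)
    (hinj : Set.InjOn gradT Θ)
    (θ θhat : EuclideanSpace ℝ (Fin d)) (hθhat : θhat ∈ Θ)
    (a lam : ℝ) (ha : 0 < a) (hlam : 0 < lam)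
    (Tlam : EuclideanSpace ℝ (Fin d) → ℝ)
    (hTlam : ∀ x, Tlam x = (1 / lam) * T (lam • x))
    (θtil : EuclideanSpace ℝ (Fin d)) (hθtil : θtil = lam⁻¹ • θhat)
    (hθdom : lam • θ ∈ Θ) :
    gradT (lam • θtil) = gradT θhat
      ∧ (∀ δ : EuclideanSpace ℝ (Fin d),
          θhat - a • δ ∈ Θ → lam • (θ + δ) ∈ Θ →
          δ ≠ (lam / (lam + a)) • θtil + (a / (lam + a)) • θ - θ →
          Real.log a - T (θhat - a • δ) + T θhat - a * Tlam (θ + δ) + a * Tlam θ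
            < Real.log a
              - T (θhat - a • ((lam / (lam + a)) • θtil + (a / (lam + a)) • θ - θ))
              + T θhat
              - a * Tlam ((lam / (lam + a)) • θtil + (a / (lam + a)) • θ)
              + a * Tlam θ) := by

  subst hθtil
  have hlamne : lam ≠ 0 := hlam.ne'
  have hs : (0:ℝ) < lam + a := by linarith
  have hsne : lam + a ≠ 0 := hs.ne'
  have hlt : lam • (lam⁻¹ • θhat) = θhat := smul_inv_smul₀ hlamne θhat
  refine ⟨by rw [hlt], ?_⟩
  intro δ h1 h2 hne
  set p : EuclideanSpace ℝ (Fin d) :=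
    (lam / (lam + a)) • (lam⁻¹ • θhat) + (a / (lam + a)) • θ - θ with hp
  set y : EuclideanSpace ℝ (Fin d) :=
    (lam / (lam + a)) • θhat + (a / (lam + a)) • (lam • θ) with hy
  have hy1 : θhat - a • p = y := by
    rw [hp, hy]; match_scalars <;> field_simp <;> ring
  have hy2 : lam • ((lam / (lam + a)) • (lam⁻¹ • θhat) + (a / (lam + a)) • θ) = y := by
    rw [hy]; match_scalars <;> field_simp <;> ring
  have hcomb : (lam / (lam + a)) • (θhat - a • δ) + (a / (lam + a)) • (lam • (θ + δ)) = y := by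
    rw [hy]; match_scalars <;> field_simp <;> ring
  have huv : θhat - a • δ ≠ lam • (θ + δ) := by
    intro h
    apply hne
    have hsm : (lam + a) • δ = (lam + a) • p := by
      have e1 : (lam + a) • δ = θhat - lam • θ := by
        have h' : θhat = lam • θ + lam • δ + a • δ := by
          have h0 := h
          rw [sub_eq_iff_eq_add, smul_add] at h0
          exact h0
        rw [h']; module
      have e2 : (lam + a) • p = θhat - lam • θ := by
        rw [hp]; match_scalars <;> field_simp <;> ring
      rw [e1, e2]
    exact smul_right_injective _ hsne hsm
  have hstrict := hTconv.2 h1 h2 huv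
    (div_pos hlam hs) (div_pos ha hs) (by field_simp)
  rw [hcomb] at hstrict
  simp only [smul_eq_mul] at hstrict
  simp only [hTlam]
  rw [hy1, hy2]
  have e2 : ((lam + a) / lam) * ((lam / (lam + a)) * T (θhat - a • δ)
      + (a / (lam + a)) * T (lam • (θ + δ)))
      = T (θhat - a • δ) + (a / lam) * T (lam • (θ + δ)) := by
    field_simp
  have h' := mul_lt_mul_of_pos_left hstrict (div_pos hs hlam)
  rw [e2] at h'
  have e3 : ((lam + a) / lam) * T y = T y + (a / lam) * T y := by field_simp
  have e4 : a * (1 / lam * T (lam • (θ + δ))) = (a / lam) * T (lam • (θ + δ)) := by ring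
  have e5 : a * (1 / lam * T y) = (a / lam) * T y := by ring
  linarith
end

section
/- Suppose an exponential-utility trader with risk aversion a > 0 and exponential family belief parameter θ̂ holds a previously purchased portfolio δ₁. Upon re-entering a generalized LMSR market (cost C = T, the log-partition function) at state θ', his expected-utility-maximizing purchase is δ₂ = (θ'' - θ')/(1+a), where θ'' = θ̂ - a δ₁. That is, he behaves identically to a trader with belief θ'' = θ̂ - aδ₁ and no prior position. -/
open RealInnerProductSpace MeasureTheory

/-- Effective belief with an existing portfolio. An exponential-utility trader
with risk aversion `a > 0` and exponential family belief `p(·; θ̂)` holding a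
prior portfolio `δ₁`, re-entering the generalized LMSR market (cost `C = T`)
at state `θ'`, maximizes
`E_{x∼p(·;θ̂)} U_a[⟪δ₁ + δ₂, φ x⟫ - K - T(δ₂ + θ') + T θ']` uniquely at
`δ₂ = (θ'' - θ')/(1+a)` where `θ'' = θ̂ - a δ₁`: i.e. he behaves like a trader
with effective belief `θ''` and no prior position. -/
theorem repeated_trading_effective_belief
    {d : ℕ} {X : Type*} [MeasurableSpace X] (ν : Measure X) [SigmaFinite ν]
    (φ : X → EuclideanSpace ℝ (Fin d))
    {Θ : Set (EuclideanSpace ℝ (Fin d))} (hΘ : IsOpen Θ) (hΘc : Convex ℝ Θ)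
    (T : EuclideanSpace ℝ (Fin d) → ℝ)
    (hT : ∀ θ, T θ = Real.log (∫ x, Real.exp ⟪θ, φ x⟫ ∂ν))
    (hTfin : ∀ θ ∈ Θ, Integrable (fun x => Real.exp ⟪θ, φ x⟫) ν)
    (gradT : EuclideanSpace ℝ (Fin d) → EuclideanSpace ℝ (Fin d))
    (hTconv : StrictConvexOn ℝ Θ T)
    (hgrad : ∀ x ∈ Θ, HasGradientAt T (gradT x) x)
    (hinj : Set.InjOn gradT Θ)
    (a : ℝ) (ha : 0 < a) (K : ℝ)
    (θhat δ₁ θ' : EuclideanSpace ℝ (Fin d)) (hθhat : θhat ∈ Θ)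
    (EU : EuclideanSpace ℝ (Fin d) → ℝ)
    (hEU : ∀ δ₂, EU δ₂ =
      ∫ x, (-(1 / a) * Real.exp (-a * (⟪δ₁ + δ₂, φ x⟫ - K - T (δ₂ + θ') + T θ')))
        * Real.exp (⟪θhat, φ x⟫ - T θhat) ∂ν) :
    ∀ δ₂ : EuclideanSpace ℝ (Fin d),
      θhat - a • (δ₁ + δ₂) ∈ Θ → δ₂ + θ' ∈ Θ →
      δ₂ ≠ (1 + a)⁻¹ • ((θhat - a • δ₁) - θ') →
      EU δ₂ < EU ((1 + a)⁻¹ • ((θhat - a • δ₁) - θ')) := by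
  intro δ₂ h2 h1 hne
  have hpa : (0:ℝ) < 1 + a := by linarith
  have h1a : (1:ℝ) + a ≠ 0 := ne_of_gt hpa
  set δs : EuclideanSpace ℝ (Fin d) := (1 + a)⁻¹ • ((θhat - a • δ₁) - θ') with hδs
  set u₁ : EuclideanSpace ℝ (Fin d) := δ₂ + θ' with hu₁
  set u₂ : EuclideanSpace ℝ (Fin d) := θhat - a • (δ₁ + δ₂) with hu₂
  set u : EuclideanSpace ℝ (Fin d) := δs + θ' with hu
  have hp : (0:ℝ) < a / (1 + a) := by positivity
  have hq : (0:ℝ) < 1 / (1 + a) := by positivity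
  have hpq : a / (1 + a) + 1 / (1 + a) = 1 := by field_simp; ring
  have hcomb : (a / (1 + a)) • u₁ + (1 / (1 + a)) • u₂ = u := by
    rw [hu₁, hu₂, hu, hδs]
    match_scalars <;> field_simp <;> ring
  have hustar : θhat - a • (δ₁ + δs) = u := by
    rw [hu, hδs]
    match_scalars <;> field_simp <;> ring
  have hne' : u₁ ≠ u₂ := by
    intro h
    apply hne
    rw [hu₁, hu₂] at h
    have h3 : (1 + a) • δ₂ = θhat - a • δ₁ - θ' := by
      linear_combination (norm := module) h
    have h4 : (1 + a) • δ₂ = (1 + a) • δs := by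
      rw [h3, hδs, smul_smul, mul_inv_cancel₀ h1a, one_smul]
    exact smul_right_injective (EuclideanSpace ℝ (Fin d)) h1a h4
  have huΘ : u ∈ Θ := by
    rw [← hcomb]
    exact hΘc h1 h2 hp.le hq.le hpq
  -- strict convexity inequality
  have hconv := hTconv.2 h1 h2 hne' hp hq hpq
  rw [hcomb] at hconv
  simp only [smul_eq_mul] at hconv
  by_cases hν : ν = 0
  · exfalso
    have hT0 : ∀ θ, T θ = 0 := by
      intro θ; rw [hT, hν]; simp
    simp only [hT0] at hconv
    simp at hconv
  · have hpos : ∀ θ ∈ Θ, 0 < ∫ x, Real.exp ⟪θ, φ x⟫ ∂ν := by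
      intro θ hθ
      rw [integral_pos_iff_support_of_nonneg (fun x => (Real.exp_pos _).le) (hTfin θ hθ)]
      have : Function.support (fun x => Real.exp ⟪θ, φ x⟫) = Set.univ := by
        ext x; simp [Function.support, (Real.exp_pos _).ne']
      rw [this]
      simpa [Measure.measure_univ_pos] using hν
    have hexpT : ∀ θ ∈ Θ, Real.exp (T θ) = ∫ x, Real.exp ⟪θ, φ x⟫ ∂ν := by
      intro θ hθ
      rw [hT]; exact Real.exp_log (hpos θ hθ)
    have key : ∀ δ : EuclideanSpace ℝ (Fin d), θhat - a • (δ₁ + δ) ∈ Θ →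
        EU δ = -(1/a) * Real.exp (a * (K + T (δ + θ') - T θ') - T θhat
          + T (θhat - a • (δ₁ + δ))) := by
      intro δ hδ
      rw [hEU]
      have heq : ∀ x, (-(1 / a) * Real.exp (-a * (⟪δ₁ + δ, φ x⟫ - K - T (δ + θ') + T θ')))
          * Real.exp (⟪θhat, φ x⟫ - T θhat)
          = (-(1/a) * Real.exp (a * (K + T (δ + θ') - T θ') - T θhat))
            * Real.exp ⟪θhat - a • (δ₁ + δ), φ x⟫ := by
        intro x
        rw [inner_sub_left, real_inner_smul_left]
        rw [mul_assoc, mul_assoc, ← Real.exp_add, ← Real.exp_add]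
        ring_nf
      simp only [heq]
      rw [integral_const_mul, ← hexpT _ hδ, mul_assoc, ← Real.exp_add]
    rw [key δ₂ h2, key δs (hustar ▸ huΘ)]
    have hneg : -(1/a) < 0 := neg_neg_iff_pos.mpr (by positivity)
    apply mul_lt_mul_of_neg_left _ hneg
    apply Real.exp_lt_exp.mpr
    rw [hustar]
    have hsimp : (1 + a) * ((a / (1 + a)) * T u₁ + (1 / (1 + a)) * T u₂)
        = a * T u₁ + T u₂ := by field_simp
    have hconv2 := (mul_lt_mul_iff_right₀ hpa).mpr hconv
    rw [hsimp] at hconv2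
    rw [← hu, ← hu₁, ← hu₂]
    nlinarith [hconv2]
end
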